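/- arXiv:2604.17466 — 5 statements merged into one kernel-verified Lean document; each statement's English description precedes it below -/
import Mathlib

section
/- Let p, e, x, y be integers with e ≥ p ≥ 5, 1 ≤ x < e, and 3 ≤ y < e. Define A = 2⌊(y−3)/p⌋ + 2, B = 2⌊(x+e)/p⌋ − 2⌈(x+3−p)/p⌉ + 2, C = ⌊(x+y)/(p−1)⌋ − ⌈(x+3−p)/p⌉, and Δ = min{A, B, C}. Then x − ⌊x/p⌋ − ⌊x/(p−1)⌋ − ⌊(x+y)/(p−1)⌋ + Δ > 0. -/
/-!
All floors and ceilings are integer divisions, with `⌈(x+3-p)/p⌉ = ⌊(x+2)/p⌋`. Since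
`⌊(m+3)/(p-1)⌋ ≤ 2⌊m/p⌋ + 1` for `m ≥ 0`, `p ≥ 5`, and `⌊(y-3)/p⌋ ≤ ⌊(e-2)/p⌋ ≤ ⌊(x+e)/p⌋ - ⌊(x+2)/p⌋`,
both `A` and `B` are at least `⌊(x+y)/(p-1)⌋ - ⌊x/(p-1)⌋`. The claim therefore reduces to
`⌊x/p⌋ + 2⌊x/(p-1)⌋ < x` for `A` and `B`, and to `⌊x/p⌋ + ⌊x/(p-1)⌋ + ⌊(x+2)/p⌋ < x` for `C`;
both follow by clearing denominators, as `1/p + 2/(p-1) < 1` and `2/p + 1/(p-1) < 1`.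
-/

theorem Int.floor_intCast_div_intCast {K : Type*} [Field K] [LinearOrder K] [IsStrictOrderedRing K]
    [FloorRing K] (a : ℤ) {b : ℤ} (hb : 0 ≤ b) : ⌊(a : K) / b⌋ = a / b := by
  lift b to ℕ using hb
  rw [Int.cast_natCast, Int.floor_div_natCast, Int.floor_intCast]

theorem Int.ceil_intCast_div_intCast {K : Type*} [Field K] [LinearOrder K] [IsStrictOrderedRing K]
    [FloorRing K] (a : ℤ) {b : ℤ} (hb : 0 < b) : ⌈(a : K) / b⌉ = (a + b - 1) / b := by
  have hbK : (0 : K) < b := by exact_mod_cast hb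
  apply le_antisymm
  · rw [Int.ceil_le, div_le_iff₀ hbK]
    have := Int.lt_ediv_add_one_mul_self (a + b - 1) hb
    exact_mod_cast (by linarith : a ≤ (a + b - 1) / b * b)
  · rw [Int.le_ceil_iff, lt_div_iff₀ hbK]
    have := Int.ediv_mul_le (a + b - 1) hb.ne'
    exact_mod_cast (by linarith : ((a + b - 1) / b - 1) * b < a)

theorem Int.add_ediv_le_ediv_add_ediv_add_one {a b c : ℤ} (hc : 0 < c) :
    (a + b) / c ≤ a / c + b / c + 1 := by
  rw [Int.add_ediv_of_pos hc]
  split_ifs <;> omega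

theorem add_three_ediv_sub_one_le {m p : ℤ} (hm : 0 ≤ m) (hp : 5 ≤ p) :
    (m + 3) / (p - 1) ≤ 2 * (m / p) + 1 := by
  have hk : 0 ≤ m / p := Int.ediv_nonneg hm (by omega)
  have hmp := Int.lt_ediv_add_one_mul_self m (by omega : 0 < p)
  rw [← Int.lt_add_one_iff, Int.ediv_lt_iff_lt_mul (by omega)]
  nlinarith [mul_nonneg hk (by omega : (0 : ℤ) ≤ p - 2)]

theorem ediv_add_two_mul_ediv_sub_one_lt {x p : ℤ} (hx : 1 ≤ x) (hp : 4 ≤ p) :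
    x / p + 2 * (x / (p - 1)) < x := by
  have h1 : p * (x / p) ≤ x := Int.mul_ediv_self_le (by omega)
  have h2 : (p - 1) * (x / (p - 1)) ≤ x := Int.mul_ediv_self_le (by omega)
  refine lt_of_mul_lt_mul_left ?_ (mul_nonneg (by omega) (by omega) : (0 : ℤ) ≤ p * (p - 1))
  calc p * (p - 1) * (x / p + 2 * (x / (p - 1)))
      = (p - 1) * (p * (x / p)) + 2 * p * ((p - 1) * (x / (p - 1))) := by ring
    _ ≤ (p - 1) * x + 2 * p * x := by gcongr; omega
    _ < p * (p - 1) * x := by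
      nlinarith [mul_le_mul_of_nonneg_left hx (by nlinarith : (0 : ℤ) ≤ p ^ 2 - 4 * p)]

theorem ediv_add_ediv_sub_one_add_ediv_lt {x p : ℤ} (hx : 1 ≤ x) (hp : 5 ≤ p) :
    x / p + x / (p - 1) + (x + 2) / p < x := by
  rcases hx.eq_or_lt with rfl | hx
  · rw [Int.ediv_eq_zero_of_lt, Int.ediv_eq_zero_of_lt, Int.ediv_eq_zero_of_lt] <;> omega
  have h1 : p * (x / p) ≤ x := Int.mul_ediv_self_le (by omega)
  have h2 : (p - 1) * (x / (p - 1)) ≤ x := Int.mul_ediv_self_le (by omega)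
  have h3 : p * ((x + 2) / p) ≤ x + 2 := Int.mul_ediv_self_le (by omega)
  refine lt_of_mul_lt_mul_left ?_ (mul_nonneg (by omega) (by omega) : (0 : ℤ) ≤ p * (p - 1))
  calc p * (p - 1) * (x / p + x / (p - 1) + (x + 2) / p)
      = (p - 1) * (p * (x / p)) + p * ((p - 1) * (x / (p - 1)))
          + (p - 1) * (p * ((x + 2) / p)) := by ring
    _ ≤ (p - 1) * x + p * x + (p - 1) * (x + 2) := by gcongr <;> omega
    _ < p * (p - 1) * x := by
      nlinarith [mul_le_mul_of_nonneg_left (by omega : 2 ≤ x)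
        (by nlinarith : (0 : ℤ) ≤ p ^ 2 - 4 * p + 2)]

theorem stmt6_general (p e x y : ℤ) (hp : 5 ≤ p)
    (hx1 : 1 ≤ x) (hy3 : 3 ≤ y) (hye : y < e) :
    0 < x - ⌊(x : ℚ) / (p : ℚ)⌋ - ⌊(x : ℚ) / ((p : ℚ) - 1)⌋
        - ⌊((x : ℚ) + (y : ℚ)) / ((p : ℚ) - 1)⌋
        + min (min (2 * ⌊((y : ℚ) - 3) / (p : ℚ)⌋ + 2)
              (2 * ⌊((x : ℚ) + (e : ℚ)) / (p : ℚ)⌋ - 2 * ⌈((x : ℚ) + 3 - (p : ℚ)) / (p : ℚ)⌉ + 2))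
            (⌊((x : ℚ) + (y : ℚ)) / ((p : ℚ) - 1)⌋ - ⌈((x : ℚ) + 3 - (p : ℚ)) / (p : ℚ)⌉) := by
  have floor_eq (a b : ℤ) (hb : 0 ≤ b) : ⌊(a : ℚ) / b⌋ = a / b :=
    Int.floor_intCast_div_intCast a hb
  have hceil : ⌈((x : ℚ) + 3 - p) / p⌉ = (x + 2) / p := by
    have := Int.ceil_intCast_div_intCast (K := ℚ) (x + 3 - p) (b := p) (by omega)
    push_cast at this
    rw [this]; congr 1; ring
  rw [floor_eq x p (by omega), hceil,
    show ⌊(x : ℚ) / (p - 1)⌋ = x / (p - 1) by exact_mod_cast floor_eq x (p - 1) (by omega),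
    show ⌊((x : ℚ) + y) / (p - 1)⌋ = (x + y) / (p - 1) by
      exact_mod_cast floor_eq (x + y) (p - 1) (by omega),
    show ⌊((y : ℚ) - 3) / p⌋ = (y - 3) / p by exact_mod_cast floor_eq (y - 3) p (by omega),
    show ⌊((x : ℚ) + e) / p⌋ = (x + e) / p by exact_mod_cast floor_eq (x + e) p (by omega)]
  have hs : (x + y) / (p - 1) ≤ x / (p - 1) + 2 * ((y - 3) / p) + 2 := by
    have := add_three_ediv_sub_one_le (m := y - 3) (by omega) hp
    rw [sub_add_cancel] at this
    linarith [Int.add_ediv_le_ediv_add_ediv_add_one (a := x) (b := y) (by omega : 0 < p - 1)]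
  have hb : (y - 3) / p ≤ (x + e) / p - (x + 2) / p := by
    have := Int.ediv_add_ediv_le_add_ediv (x := x + 2) (y := e - 2) (by omega : 0 < p)
    rw [add_add_sub_cancel] at this
    linarith [Int.ediv_le_ediv (by omega : 0 < p) (by omega : y - 3 ≤ e - 2)]
  have hAB := ediv_add_two_mul_ediv_sub_one_lt hx1 (by omega : 4 ≤ p)
  have hC := ediv_add_ediv_sub_one_add_ediv_lt hx1 hp
  rw [← min_add_add_left, ← min_add_add_left]
  simp only [lt_min_iff]
  refine ⟨⟨?_, ?_⟩, ?_⟩ <;> linarith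

/-- the Claim at the end of Section 5.3. With
`A = 2⌊(y−3)/p⌋+2`, `B = 2⌊(x+e)/p⌋ − 2⌈(x+3−p)/p⌉ + 2`,
`C = ⌊(x+y)/(p−1)⌋ − ⌈(x+3−p)/p⌉` and `Δ = min{A,B,C}`, one has
`x − ⌊x/p⌋ − ⌊x/(p−1)⌋ − ⌊(x+y)/(p−1)⌋ + Δ > 0`. -/
theorem stmt6 (p e x y : ℤ) (hpe : p ≤ e) (hp : 5 ≤ p)
    (hx1 : 1 ≤ x) (hxe : x < e) (hy3 : 3 ≤ y) (hye : y < e) :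
    0 < x - ⌊(x : ℚ) / (p : ℚ)⌋ - ⌊(x : ℚ) / ((p : ℚ) - 1)⌋
        - ⌊((x : ℚ) + (y : ℚ)) / ((p : ℚ) - 1)⌋
        + min (min (2 * ⌊((y : ℚ) - 3) / (p : ℚ)⌋ + 2)
              (2 * ⌊((x : ℚ) + (e : ℚ)) / (p : ℚ)⌋ - 2 * ⌈((x : ℚ) + 3 - (p : ℚ)) / (p : ℚ)⌉ + 2))
            (⌊((x : ℚ) + (y : ℚ)) / ((p : ℚ) - 1)⌋ - ⌈((x : ℚ) + 3 - (p : ℚ)) / (p : ℚ)⌉) :=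
  stmt6_general p e x y hp hx1 hy3 hye
end

section
/- Let O be a discrete valuation ring with uniformiser ϖ, and let R be an O-algebra which is ϖ-torsion-free (so R injects into R[1/ϖ]). Assume R/ϖR is reduced. Then every idempotent e of R[1/ϖ] (e² = e) lies in the image of R in R[1/ϖ]. -/
/-!
If `e` is an idempotent of `R[1/π]` and `πⁿ e` comes from `r ∈ R` with `n ≥ 1`, then
`r² = πⁿ r` in `R` (by `π`-torsion-freeness), so `r` is nilpotent modulo `π`; as `R/πR` is
reduced, `r = π r'` and `πⁿ⁻¹ e` comes from `r'`. Descending to `n = 0` puts `e` in `R`.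
-/

namespace IsLocalization.Away

variable {R S : Type*} [CommRing R] [CommRing S] [Algebra R S] {π : R} [IsLocalization.Away π S]

theorem exists_algebraMap_eq_pow_mul_of_algebraMap_eq_pow_succ_mul
    (hπ : π ∈ nonZeroDivisors R) (hrad : (Ideal.span {π}).IsRadical)
    {e : S} (he : IsIdempotentElem e) {n : ℕ} {r : R}
    (hr : algebraMap R S r = algebraMap R S π ^ (n + 1) * e) :
    ∃ r' : R, algebraMap R S r' = algebraMap R S π ^ n * e := by
  have hinj : Function.Injective (algebraMap R S) :=
    IsLocalization.injective S (Submonoid.powers_le.mpr hπ)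
  have hr_sq : r * r = π ^ (n + 1) * r := hinj <| by
    simp only [map_mul, map_pow, hr]
    linear_combination (algebraMap R S π ^ (n + 1)) ^ 2 * he.eq
  have hr_mem : r ∈ Ideal.span {π} := hrad ⟨2, by
    rw [sq, hr_sq]
    exact Ideal.mul_mem_right _ _
      (Ideal.pow_mem_of_mem _ (Ideal.mem_span_singleton_self π) _ n.succ_pos)⟩
  obtain ⟨r', rfl⟩ := Ideal.mem_span_singleton'.mp hr_mem
  refine ⟨r', (algebraMap_isUnit π).mul_left_cancel ?_⟩
  rw [← mul_comm (algebraMap R S r'), ← map_mul, hr, pow_succ]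
  ring

theorem exists_algebraMap_eq_of_isIdempotentElem
    (hπ : π ∈ nonZeroDivisors R) (hrad : (Ideal.span {π}).IsRadical)
    {e : S} (he : IsIdempotentElem e) : ∃ r : R, algebraMap R S r = e := by
  suffices descent : ∀ n : ℕ, (∃ r : R, algebraMap R S r = algebraMap R S π ^ n * e) →
      ∃ r : R, algebraMap R S r = e by
    obtain ⟨n, r, hr⟩ := surj π e
    exact descent n ⟨r, by rw [← hr, mul_comm]⟩
  intro n
  induction n with
  | zero => simp
  | succ n ih =>
    rintro ⟨r, hr⟩
    exact ih (exists_algebraMap_eq_pow_mul_of_algebraMap_eq_pow_succ_mul hπ hrad he hr)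

end IsLocalization.Away

theorem stmt10_general (O : Type) [CommRing O]
    (ϖ : O)
    (R : Type) [CommRing R] [Algebra O R]
    (htf : ∀ r : R, algebraMap O R ϖ * r = 0 → r = 0)
    (hred : IsReduced (R ⧸ Ideal.span {algebraMap O R ϖ}))
    (e : Localization.Away (algebraMap O R ϖ)) (he : e * e = e) :
    ∃ r : R, algebraMap R (Localization.Away (algebraMap O R ϖ)) r = e := by
  have hπ : algebraMap O R ϖ ∈ nonZeroDivisors R :=
    mem_nonZeroDivisors_iff_right.mpr fun r hr => htf r (by rwa [mul_comm] at hr)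
  exact IsLocalization.Away.exists_algebraMap_eq_of_isIdempotentElem hπ
    ((Ideal.isRadical_iff_quotient_reduced _).mpr hred) he

/-- if `O` is a DVR with uniformiser `ϖ`, `R` a `ϖ`-torsion-free `O`-algebra
with `R/ϖR` reduced, then every idempotent of `R[1/ϖ]` lies in the image of `R`. -/
theorem stmt10 (O : Type) [CommRing O] [IsDomain O] [IsDiscreteValuationRing O]
    (ϖ : O) (hϖ : Irreducible ϖ)
    (R : Type) [CommRing R] [Algebra O R]
    (htf : ∀ r : R, algebraMap O R ϖ * r = 0 → r = 0)
    (hred : IsReduced (R ⧸ Ideal.span {algebraMap O R ϖ}))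
    (e : Localization.Away (algebraMap O R ϖ)) (he : e * e = e) :
    ∃ r : R, algebraMap R (Localization.Away (algebraMap O R ϖ)) r = e :=
  stmt10_general O ϖ R htf hred e he
end

section
/- Let q be a prime power and let a, m, n be positive integers with a·m ≤ n and q ≥ n + 1. Then the number of orbits of the Frobenius group Gal(𝔽_{q^a}/𝔽_{q}) acting on the set of x ∈ 𝔽_{q^a}^× with 𝔽_q(x) = 𝔽_{q^a} is at least m. (Each such orbit has size exactly a, so equivalently the number of nonzero elements of 𝔽_{q^a} of degree exactly a over 𝔽_q is at least a·m.) -/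
/-!
An element `x` of degree `d` over `F` lies in `F⟮x⟯`, a field with `q ^ d` elements, so it is a
root of `X ^ q ^ d - X`. Hence at most `q + q² + ⋯ + q^(a-1) + 1 ≤ q ^ a - q + 1` elements of the
field `E` with `q ^ a` elements have degree `< a` or are zero, leaving at least `q - 1 ≥ n ≥ a m`
nonzero elements of degree `a`.
-/

open scoped Classical

open Finset Polynomial IntermediateField

theorem Nat.sum_range_pow_succ_add_le {q : ℕ} (hq : 2 ≤ q) (b : ℕ) :
    ∑ k ∈ range b, q ^ (k + 1) + q ≤ q ^ (b + 1) :=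
  calc ∑ k ∈ range b, q ^ (k + 1) + q = q * (∑ k ∈ range b, q ^ k + 1) := by
        simp only [mul_add, mul_sum, ← pow_succ', mul_one]
    _ ≤ q * q ^ b := Nat.mul_le_mul_left q (Nat.geomSum_lt hq fun _ ↦ mem_range.mp)
    _ = q ^ (b + 1) := (pow_succ' ..).symm

theorem card_filter_pow_eq_self_le {K : Type*} [Field K] [Fintype K] {N : ℕ} (hN : 1 < N) :
    #(univ.filter fun x : K ↦ x ^ N = x) ≤ N := by
  have := card_le_degree_of_subset_roots (p := (X ^ N - X : K[X]))
    (Z := univ.filter fun x : K ↦ x ^ N = x) fun x hx ↦ by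
      simp_all [mem_roots', FiniteField.X_pow_card_sub_X_ne_zero K hN]
  rwa [FiniteField.X_pow_card_sub_X_natDegree_eq K hN] at this

theorem pow_card_pow_natDegree_minpoly {F E : Type*} [Field F] [Fintype F] [Field E] [Finite E]
    [Algebra F E] (x : E) : x ^ Fintype.card F ^ (minpoly F x).natDegree = x := by
  let K := F⟮x⟯
  have : Fintype K := Fintype.ofFinite K
  have hK : Fintype.card K = Fintype.card F ^ (minpoly F x).natDegree := by
    rw [Module.card_eq_pow_finrank (K := F), adjoin.finrank (.of_finite F x)]
  simpa [hK] using congrArg Subtype.val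
    (FiniteField.pow_card (⟨x, mem_adjoin_simple_self F x⟩ : K))

variable {F E : Type*} [Field F] [Fintype F] [Field E] [Fintype E] [Algebra F E]

theorem card_filter_natDegree_minpoly_lt_finrank_add_card_le :
    #(univ.filter fun x : E ↦ (minpoly F x).natDegree < Module.finrank F E) + Fintype.card F ≤
      Fintype.card E := by
  set q := Fintype.card F
  set a := Module.finrank F E
  have hq : 1 < q := Fintype.one_lt_card
  have ha : 0 < a := Module.finrank_pos
  have hsub : (univ.filter fun x : E ↦ (minpoly F x).natDegree < a) ⊆
      (range (a - 1)).biUnion fun k ↦ univ.filter fun x : E ↦ x ^ q ^ (k + 1) = x := by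
    intro x hx
    have hdeg : 0 < (minpoly F x).natDegree := minpoly.natDegree_pos (.of_finite F x)
    simp only [mem_filter, mem_univ, true_and, mem_biUnion, mem_range] at hx ⊢
    exact ⟨(minpoly F x).natDegree - 1, by omega, by
      rw [Nat.sub_add_cancel hdeg]; exact pow_card_pow_natDegree_minpoly x⟩
  calc _ ≤ ∑ k ∈ range (a - 1), q ^ (k + 1) + q := by
        gcongr
        refine (card_le_card hsub).trans (card_biUnion_le.trans (sum_le_sum fun k _ ↦ ?_))
        exact card_filter_pow_eq_self_le (Nat.one_lt_pow k.succ_ne_zero hq)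
    _ ≤ q ^ (a - 1 + 1) := Nat.sum_range_pow_succ_add_le hq (a - 1)
    _ = Fintype.card E := by rw [Nat.sub_add_cancel ha, Module.card_eq_pow_finrank (K := F)]

theorem card_sub_one_le_card_filter_ne_zero_natDegree_minpoly_eq_finrank :
    Fintype.card F - 1 ≤
      #(univ.filter fun x : E ↦ x ≠ 0 ∧ (minpoly F x).natDegree = Module.finrank F E) := by
  have hlow := card_filter_natDegree_minpoly_lt_finrank_add_card_le (F := F) (E := E)
  set top := univ.filter fun x : E ↦ x ≠ 0 ∧ (minpoly F x).natDegree = Module.finrank F E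
  set low := univ.filter fun x : E ↦ (minpoly F x).natDegree < Module.finrank F E
  have hcover : (univ : Finset E) ⊆ top ∪ insert 0 low := by
    intro x _
    have : (minpoly F x).natDegree ≤ Module.finrank F E := minpoly.natDegree_le x
    rcases eq_or_ne x 0 with hx | hx
    · simp [hx]
    · simp only [top, low, mem_union, mem_insert, mem_filter, mem_univ, hx, ne_eq,
        not_false_eq_true, true_and, false_or]
      omega
  have hcard : Fintype.card E ≤ #top + (#low + 1) :=
    calc Fintype.card E = #(univ : Finset E) := card_univ.symm
      _ ≤ #(top ∪ insert 0 low) := card_le_card hcover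
      _ ≤ #top + #(insert 0 low) := card_union_le _ _
      _ ≤ #top + (#low + 1) := Nat.add_le_add_left (card_insert_le _ _) _
  omega

theorem stmt16_general (F E : Type) [Field F] [Field E] [Fintype F] [Fintype E] [Algebra F E]
    (q a m n : ℕ) (hq : Fintype.card F = q) (ha : Module.finrank F E = a)
    (hamn : a * m ≤ n) (hqn : n + 1 ≤ q) :
    a * m ≤ (Finset.univ.filter fun x : E => x ≠ 0 ∧ (minpoly F x).natDegree = a).card := by
  subst hq ha
  exact hamn.trans <| (Nat.le_sub_one_of_lt hqn).trans
    card_sub_one_le_card_filter_ne_zero_natDegree_minpoly_eq_finrank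

/-- Lemma A.4: if `F` is a finite field with `q` elements, `E/F` an
extension of degree `a`, and `a·m ≤ n` with `q ≥ n + 1`, then the number of nonzero
elements of `E` of degree exactly `a` over `F` is at least `a·m` (equivalently, the number
of Frobenius orbits of such elements is at least `m`). -/
theorem stmt16 (F E : Type) [Field F] [Field E] [Fintype F] [Fintype E] [Algebra F E]
    (q a m n : ℕ) (hq : Fintype.card F = q) (ha : Module.finrank F E = a)
    (ha1 : 1 ≤ a) (hm1 : 1 ≤ m) (hn1 : 1 ≤ n) (hamn : a * m ≤ n) (hqn : n + 1 ≤ q) :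
    a * m ≤ (Finset.univ.filter fun x : E => x ≠ 0 ∧ (minpoly F x).natDegree = a).card :=
  stmt16_general F E q a m n hq ha hamn hqn
end

section
/- Let F be a field, r, s ≥ 1, and t ≤ r + s + 1. Inside the affine space of quadruples (A, C, B, D) where A, C range over polynomials of degree ≤ r and B, D over polynomials of degree ≤ s in a variable Z (an affine space of dimension 2r + 2s + 4 over F), consider the closed subset M = {(A, C, B, D) : A·B ≡ C·D mod Z^t}. Then the codimension of M in this affine space is at least min{2r + 2, 2s + 2, t}, i.e. dim M ≤ 2r + 2s + 4 − min{2r + 2, 2s + 2, t}. -/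
/-!
The quotient `R` by the first `c = min (2r + 2) (2s + 2) t` coefficients of `A·B - C·D` is a
finitely generated `F`-algebra, so by Noether normalization `dim R ≤ M` as soon as any `M + 1`
elements of `R` are algebraically dependent. This holds when the images of the polynomials of
degree `≤ n` span a subspace of dimension `O(n ^ M)`: the `(e + 1) ^ (M + 1)` monomials of
exponent `≤ e` in the `M + 1` elements cannot all be linearly independent.

Weight the coefficient variables by `pos ^ 2`, where `pos` puts `A_i, C_i, B_j, D_j` at
`2i + 2, 2i + 1, 2j, 2j + 1` (at `2i, 2i + 1, 2j + 2, 2j + 1` when `r > s`, which keeps the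
indices below in range). All products in the coefficient of `Z ^ k` have positions summing to
`2k + 2`, so the unique lightest one is `x_k y_k` with `pos x_k = pos y_k = k + 1`; for `k < c`
these are `2c` distinct variables. Rewriting `x_k y_k` modulo the relations raises the weight, so
`R` is spanned by the monomials divisible by no `x_k y_k`, and in degree `≤ n` there are at most
`2 ^ c (n + 1) ^ (2r + 2s + 4 - c)` of them.
-/

/-- The variable set for Lemma 5.6: coefficients of `A`, `C` (degree `≤ r`) and of
`B`, `D` (degree `≤ s`). -/
def BMVars (r s : ℕ) : Type := (Fin (r + 1) ⊕ Fin (r + 1)) ⊕ (Fin (s + 1) ⊕ Fin (s + 1))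

/-- The generic polynomial of degree `≤ n` in `Z` with coefficients the variables
selected by `sel`. -/
noncomputable def genPoly (F : Type) [Field F] (r s n : ℕ) (sel : Fin (n + 1) → BMVars r s) :
    Polynomial (MvPolynomial (BMVars r s) F) :=
  ∑ i : Fin (n + 1), Polynomial.C (MvPolynomial.X (sel i)) * Polynomial.X ^ (i : ℕ)

open MvPolynomial Finsupp

section KrullDimension

theorem ringKrullDim_le_of_isIntegral {R S : Type*} [CommRing R] [CommRing S] (f : R →+* S)
    (hf : f.IsIntegral) : ringKrullDim S ≤ ringKrullDim R := by
  let := f.toAlgebra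
  have : Algebra.IsIntegral R S := ⟨hf⟩
  exact Order.krullDim_le_of_strictMono (PrimeSpectrum.comap f) fun p q hpq =>
    Ideal.IsIntegral.comap_lt_comap (R := R) (show p.asIdeal < q.asIdeal from hpq)

theorem ringKrullDim_le_of_forall_not_algebraicIndependent (F R : Type*) [Field F] [CommRing R]
    [Algebra F R] [Algebra.FiniteType F R] (M : ℕ)
    (h : ∀ y : Fin (M + 1) → R, ¬ AlgebraicIndependent F y) : ringKrullDim R ≤ M := by
  nontriviality R
  obtain ⟨s, g, hg, hgi⟩ := exists_integral_inj_algHom_of_fg F R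
  have hs : s ≤ M := by
    by_contra! hMs
    exact h _ (((algebraicIndependent_X (Fin s) F).map' hg).comp _ (Fin.castLE_injective hMs))
  calc ringKrullDim R ≤ ringKrullDim (MvPolynomial (Fin s) F) :=
        ringKrullDim_le_of_isIntegral g.toRingHom hgi
    _ = s := by simp
    _ ≤ M := by exact_mod_cast hs

theorem mul_pow_lt_pow_succ_of_eq {K D M e : ℕ} (he : e = K * (D + 1) ^ M) :
    K * (e * D + 1) ^ M < (e + 1) ^ (M + 1) :=
  calc K * (e * D + 1) ^ M ≤ K * ((D + 1) * (e + 1)) ^ M := by gcongr; nlinarith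
    _ = e * (e + 1) ^ M := by rw [mul_pow, he]; ring
    _ < (e + 1) ^ (M + 1) := by rw [pow_succ' (e + 1)]; gcongr; omega

theorem not_algebraicIndependent_of_span_card_le {F σ A : Type*} [Field F] [CommRing A]
    [Algebra F A] (ψ : MvPolynomial σ F →ₐ[F] A) (hψ : Function.Surjective ψ) (K M : ℕ)
    (H : ∀ n : ℕ, ∃ G : Finset A, G.card ≤ K * (n + 1) ^ M ∧
      ∀ f : MvPolynomial σ F, f.totalDegree ≤ n → ψ f ∈ Submodule.span F (G : Set A))
    (y : Fin (M + 1) → A) : ¬ AlgebraicIndependent F y := by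
  intro hy
  choose Y hY using fun i => hψ (y i)
  set D := ∑ i, (Y i).totalDegree
  -- `e` is large enough that the `(e + 1) ^ (M + 1)` monomials of exponent `≤ e` in `y`, all of
  -- degree `≤ e D` in the `Y i`, outnumber the `K (e D + 1) ^ M` spanning elements
  set e := K * (D + 1) ^ M
  obtain ⟨G, hG, hspan⟩ := H (e * D)
  let expo : (Fin (M + 1) → Fin (e + 1)) → (Fin (M + 1) →₀ ℕ) :=
    fun α => Finsupp.equivFunOnFinite.symm fun i => (α i : ℕ)
  have hexpo : Function.Injective expo := fun α β h =>
    funext fun i => Fin.ext (DFunLike.congr_fun h i)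
  have hmem : ∀ α, aeval y (monomial (expo α) (1 : F)) ∈ Submodule.span F (G : Set A) := by
    intro α
    rw [show aeval y (monomial (expo α) (1 : F)) = ψ (aeval Y (monomial (expo α) (1 : F))) by
      rw [comp_aeval_apply]; simp_rw [hY]]
    apply hspan
    rw [aeval_monomial, map_one, one_mul, Finsupp.prod_fintype _ _ fun _ => pow_zero _]
    calc (∏ i, Y i ^ expo α i).totalDegree ≤ ∑ i, expo α i * (Y i).totalDegree :=
          (totalDegree_finsetProd _ _).trans
            (Finset.sum_le_sum fun i _ => totalDegree_pow _ _)
      _ ≤ ∑ i, e * (Y i).totalDegree :=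
          Finset.sum_le_sum fun i _ => Nat.mul_le_mul_right _ (Fin.is_le _)
      _ = e * D := Finset.mul_sum _ _ _ |>.symm
  have hli : LinearIndependent F fun α => (⟨_, hmem α⟩ : Submodule.span F (G : Set A)) := by
    apply LinearIndependent.of_comp (Submodule.span F (G : Set A)).subtype
    have := ((basisMonomials _ F).linearIndependent.comp expo hexpo).map'
      (aeval y).toLinearMap (LinearMap.ker_eq_bot.mpr hy)
    rw [coe_basisMonomials] at this
    exact this
  have hcard : (e + 1) ^ (M + 1) ≤ K * (e * D + 1) ^ M := by
    simpa using hli.fintype_card_le_finrank.trans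
      ((finrank_span_finset_le_card G).trans hG)
  exact (mul_pow_lt_pow_succ_of_eq rfl).not_ge hcard

end KrullDimension

section StandardMonomials

variable {F σ ι : Type*} [Field F]

variable (F) in
noncomputable def heavierSpan (w : σ → ℕ) (d b : ℕ) :
    Submodule F (MvPolynomial σ F) :=
  Submodule.span F ((monomial · 1) '' {m | m.degree ≤ d ∧ b < weight w m})

def standardMonomials (L : ι → σ →₀ ℕ) (n : ℕ) : Set (σ →₀ ℕ) :=
  {m | m.degree ≤ n ∧ ∀ k, ¬ L k ≤ m}

theorem weight_le_mul_degree (w : σ → ℕ) {W : ℕ} (hW : ∀ x, w x ≤ W) (m : σ →₀ ℕ) :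
    weight w m ≤ W * m.degree := by
  rw [weight_apply, degree_apply, Finset.mul_sum]
  exact Finset.sum_le_sum fun x _ => (Nat.mul_le_mul_left _ (hW x)).trans_eq (mul_comm _ _)

theorem mk_monomial_mem_span_standardMonomials [Finite σ] (w : σ → ℕ)
    (I : Ideal (MvPolynomial σ F)) (L : ι → σ →₀ ℕ)
    (hL : ∀ k, monomial (L k) (1 : F) ∈
      I.restrictScalars F ⊔ heavierSpan F w (L k).degree (weight w (L k)))
    {n : ℕ} {m : σ →₀ ℕ} (hm : m.degree ≤ n) :
    Ideal.Quotient.mk I (monomial m (1 : F)) ∈ Submodule.span F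
      ((fun m => Ideal.Quotient.mk I (monomial m 1)) '' standardMonomials L n) := by
  set S := Submodule.span F
    ((fun m => Ideal.Quotient.mk I (monomial m (1 : F))) '' standardMonomials L n)
  obtain ⟨W, hW⟩ := Finite.exists_le w
  -- rewriting `X^m = X^(m - L k) X^(L k)` modulo `I` raises the weight, which stays `≤ W n`
  induction hd : W * n - weight w m using Nat.strong_induction_on generalizing m with
  | _ d ih =>
  by_cases hstd : ∀ k, ¬ L k ≤ m
  · exact Submodule.subset_span ⟨m, ⟨hm, hstd⟩, rfl⟩
  obtain ⟨k, hk⟩ := not_forall_not.mp hstd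
  obtain ⟨a, ha, b, hb, hab⟩ := Submodule.mem_sup.mp (hL k)
  have hsplit : m = (m - L k) + L k := (tsub_add_cancel_of_le hk).symm
  let φ : MvPolynomial σ F →ₗ[F] MvPolynomial σ F ⧸ I :=
    (Ideal.Quotient.mkₐ F I).toLinearMap ∘ₗ LinearMap.mulLeft F (monomial (m - L k) 1)
  have hφ : ∀ m', φ (monomial m' 1) = Ideal.Quotient.mk I (monomial (m - L k + m') 1) := by
    simp [φ, monomial_mul]
  have hφa : φ a = 0 := Ideal.Quotient.eq_zero_iff_mem.mpr (I.mul_mem_left _ ha)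
  rw [hsplit, ← hφ, ← hab, map_add, hφa, zero_add]
  refine (Submodule.span_le (p := S.comap φ)).mpr ?_ hb
  rintro _ ⟨m', ⟨hdeg, hwt⟩, rfl⟩
  have hdeg' : (m - L k + m').degree ≤ n := by
    have := congrArg degree hsplit
    simp only [map_add] at this ⊢
    omega
  have hwt' : weight w m < weight w (m - L k + m') := by
    have := congrArg (weight w) hsplit
    simp only [map_add] at this ⊢
    omega
  have hWn := (weight_le_mul_degree w hW (m - L k + m')).trans (Nat.mul_le_mul_left W hdeg')
  show φ (monomial m' 1) ∈ S
  rw [hφ]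
  exact ih _ (by omega) hdeg' rfl

theorem mk_mem_span_standardMonomials [Finite σ] (w : σ → ℕ) (I : Ideal (MvPolynomial σ F))
    (L : ι → σ →₀ ℕ)
    (hL : ∀ k, monomial (L k) (1 : F) ∈
      I.restrictScalars F ⊔ heavierSpan F w (L k).degree (weight w (L k)))
    {n : ℕ} {f : MvPolynomial σ F} (hf : f.totalDegree ≤ n) :
    Ideal.Quotient.mk I f ∈ Submodule.span F
      ((fun m => Ideal.Quotient.mk I (monomial m 1)) '' standardMonomials L n) := by
  rw [← support_sum_monomial_coeff f, map_sum]
  refine Submodule.sum_mem _ fun m hm => ?_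
  rw [← mul_one (coeff m f), ← smul_eq_mul, ← smul_monomial, ← Ideal.Quotient.mkₐ_eq_mk F,
    map_smul, Ideal.Quotient.mkₐ_eq_mk]
  exact Submodule.smul_mem _ _
    (mk_monomial_mem_span_standardMonomials w I L hL ((le_totalDegree hm).trans hf))

theorem finite_standardMonomials [Finite σ] (L : ι → σ →₀ ℕ) (n : ℕ) :
    (standardMonomials L n).Finite :=
  (finite_of_degree_le n).subset fun _ hm => hm.1

theorem ncard_standardMonomials_le [Fintype σ] {c : ℕ} (u v : Fin c → σ)
    (huv : Function.Injective (Sum.elim u v)) (n : ℕ) :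
    (standardMonomials (fun k => single (u k) 1 + single (v k) 1) n).ncard ≤
      2 ^ c * (n + 1) ^ (Fintype.card σ - c) := by
  classical
  set S := standardMonomials (fun k => single (u k) 1 + single (v k) 1) n
  -- `b` records, for each `k`, a variable among `u k`, `v k` that does not occur
  let z : (Fin c → Bool) → Fin c → σ := fun b k => if b k then u k else v k
  have hz : ∀ b, Function.Injective (z b) := by
    intro b k k' h
    simp only [z] at h
    split_ifs at h
    exacts [Sum.inl_injective (@huv (.inl k) (.inl k') h),
      absurd (@huv (.inl k) (.inr k') h) Sum.inl_ne_inr,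
      absurd (@huv (.inr k) (.inl k') h) Sum.inr_ne_inl,
      Sum.inr_injective (@huv (.inr k) (.inr k') h)]
  let T : (Fin c → Bool) → Set (σ →₀ ℕ) := fun b => {m ∈ S | ∀ k, m (z b k) = 0}
  have hcover : S ⊆ ⋃ b, T b := by
    intro m hm
    refine Set.mem_iUnion.mpr ⟨fun k => decide (m (u k) = 0), hm, fun k => ?_⟩
    by_cases hu : m (u k) = 0
    · simp [z, hu]
    · simp only [z, hu, decide_false, Bool.false_eq_true, if_false]
      by_contra hv
      refine hm.2 k fun x => ?_
      have hne : u k ≠ v k := fun h => Sum.inl_ne_inr (huv h)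
      simp only [Finsupp.coe_add, Pi.add_apply, single_apply]
      split_ifs with h1 h2 <;> subst_vars <;> first | omega | exact absurd h2.symm hne
  have hT : ∀ b, (T b).ncard ≤ (n + 1) ^ (Fintype.card σ - c) := by
    intro b
    have hle : ∀ m ∈ S, ∀ x, m x ≤ n := fun m hm x => (le_degree x m).trans hm.1
    calc (T b).ncard
        ≤ (Set.univ : Set ({x // x ∉ Set.range (z b)} → Fin (n + 1))).ncard := by
          refine Set.ncard_le_ncard_of_injOn
            (fun m x => ⟨min (m x) n, Nat.lt_succ_of_le (min_le_right _ _)⟩)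
            (fun _ _ => Set.mem_univ _) fun m hm m' hm' h => Finsupp.ext fun x => ?_
          by_cases hx : x ∈ Set.range (z b)
          · obtain ⟨k, rfl⟩ := hx
            rw [hm.2 k, hm'.2 k]
          · have := congrArg Fin.val (congrFun h ⟨x, hx⟩)
            simp only at this
            rwa [min_eq_left (hle m hm.1 x), min_eq_left (hle m' hm'.1 x)] at this
      _ = (n + 1) ^ (Fintype.card σ - c) := by
          rw [Set.ncard_univ, Nat.card_eq_fintype_card, Fintype.card_fun, Fintype.card_fin,
            Fintype.card_subtype_compl, Set.card_range_of_injective (hz b), Fintype.card_fin]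
  calc S.ncard ≤ (⋃ b, T b).ncard :=
        Set.ncard_le_ncard hcover ((finite_standardMonomials _ n).subset
          (Set.iUnion_subset fun b => Set.sep_subset _ _))
    _ ≤ ∑ b, (T b).ncard := Set.ncard_iUnion_le_of_fintype T
    _ ≤ ∑ _b : Fin c → Bool, (n + 1) ^ (Fintype.card σ - c) := Finset.sum_le_sum fun b _ => hT b
    _ = 2 ^ c * (n + 1) ^ (Fintype.card σ - c) := by simp

theorem two_mul_sq_lt_sq_add_sq {a b K : ℕ} (hab : a + b = 2 * K) (ha : a ≠ K) :
    2 * K ^ 2 < a ^ 2 + b ^ 2 := by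
  have hb : b ≠ a := by omega
  zify at hab hb ⊢
  nlinarith [sq_pos_of_ne_zero (sub_ne_zero.mpr hb)]

variable (F) in
theorem X_mul_X_mem_heavierSpan (p : σ → ℕ) {x y : σ} {K : ℕ}
    (hxy : p x + p y = 2 * K) (hx : p x ≠ K) :
    (X x * X y : MvPolynomial σ F) ∈ heavierSpan F (fun z => p z ^ 2) 2 (2 * K ^ 2) := by
  refine Submodule.subset_span ⟨single x 1 + single y 1, ⟨?_, ?_⟩, ?_⟩
  · simp
  · simpa [weight_single] using two_mul_sq_lt_sq_add_sq hxy hx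
  · simp [X, monomial_mul]

end StandardMonomials

namespace BMVars

variable {F : Type} [Field F] {r s : ℕ}

instance : Fintype (BMVars r s) :=
  inferInstanceAs (Fintype ((Fin (r + 1) ⊕ Fin (r + 1)) ⊕ (Fin (s + 1) ⊕ Fin (s + 1))))

theorem card_eq : Fintype.card (BMVars r s) = 2 * r + 2 * s + 4 := by
  change Fintype.card ((Fin (r + 1) ⊕ Fin (r + 1)) ⊕ (Fin (s + 1) ⊕ Fin (s + 1))) = _
  simp only [Fintype.card_sum, Fintype.card_fin]
  ring

def varA (i : Fin (r + 1)) : BMVars r s := .inl (.inl i)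
def varC (i : Fin (r + 1)) : BMVars r s := .inl (.inr i)
def varB (j : Fin (s + 1)) : BMVars r s := .inr (.inl j)
def varD (j : Fin (s + 1)) : BMVars r s := .inr (.inr j)

def pos : BMVars r s → ℕ
  | .inl (.inl i) => 2 * i + if r ≤ s then 2 else 0
  | .inl (.inr i) => 2 * i + 1
  | .inr (.inl j) => 2 * j + if r ≤ s then 0 else 2
  | .inr (.inr j) => 2 * j + 1

def posWeight (x : BMVars r s) : ℕ := pos x ^ 2

@[simp] theorem pos_varA (i : Fin (r + 1)) :
    pos (varA i : BMVars r s) = 2 * i + if r ≤ s then 2 else 0 := rfl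
@[simp] theorem pos_varC (i : Fin (r + 1)) : pos (varC i : BMVars r s) = 2 * i + 1 := rfl
@[simp] theorem pos_varB (j : Fin (s + 1)) :
    pos (varB j : BMVars r s) = 2 * j + if r ≤ s then 0 else 2 := rfl
@[simp] theorem pos_varD (j : Fin (s + 1)) : pos (varD j : BMVars r s) = 2 * j + 1 := rfl

variable (F r s) in
noncomputable def congrCoeff (k : ℕ) : MvPolynomial (BMVars r s) F :=
  (genPoly F r s r varA * genPoly F r s s varB -
    genPoly F r s r varC * genPoly F r s s varD).coeff k

theorem coeff_genPoly_mul_genPoly {n m : ℕ} (sel : Fin (n + 1) → BMVars r s)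
    (sel' : Fin (m + 1) → BMVars r s) (k : ℕ) :
    (genPoly F r s n sel * genPoly F r s m sel').coeff k =
      ∑ p : Fin (n + 1) × Fin (m + 1),
        if (p.1 : ℕ) + p.2 = k then X (sel p.1) * X (sel' p.2) else 0 := by
  simp only [genPoly, Finset.sum_mul_sum, Polynomial.finsetSum_coeff, Fintype.sum_prod_type]
  refine Finset.sum_congr rfl fun i _ => Finset.sum_congr rfl fun j _ => ?_
  rw [mul_mul_mul_comm, ← Polynomial.C_mul, ← pow_add, Polynomial.coeff_C_mul_X_pow]
  simp only [eq_comm]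

theorem congrCoeff_eq_sum (k : ℕ) :
    congrCoeff F r s k = ∑ p : Fin (r + 1) × Fin (s + 1),
      if (p.1 : ℕ) + p.2 = k then
        X (varA p.1) * X (varB p.2) - X (varC p.1) * X (varD p.2)
      else 0 := by
  rw [congrCoeff, Polynomial.coeff_sub, coeff_genPoly_mul_genPoly, coeff_genPoly_mul_genPoly,
    ← Finset.sum_sub_distrib]
  refine Finset.sum_congr rfl fun p _ => ?_
  split_ifs <;> simp

theorem pos_varA_add_pos_varB (i : Fin (r + 1)) (j : Fin (s + 1)) :
    pos (varA i : BMVars r s) + pos (varB j : BMVars r s) = 2 * (i + j + 1) := by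
  simp only [pos_varA, pos_varB]
  split_ifs <;> omega

theorem pos_varC_add_pos_varD (i : Fin (r + 1)) (j : Fin (s + 1)) :
    pos (varC i : BMVars r s) + pos (varD j : BMVars r s) = 2 * (i + j + 1) := by
  simp only [pos_varC, pos_varD]
  omega

theorem mkQ_congrCoeff {k : ℕ} (i₀ : Fin (r + 1)) (j₀ : Fin (s + 1)) (hij₀ : (i₀ : ℕ) + j₀ = k)
    (hA : ∀ i, pos (varA i : BMVars r s) = k + 1 → i = i₀)
    (hC : ∀ i, pos (varC i : BMVars r s) = k + 1 → i = i₀) :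
    (heavierSpan F posWeight 2 (2 * (k + 1) ^ 2)).mkQ (congrCoeff F r s k) =
      (heavierSpan F posWeight 2 (2 * (k + 1) ^ 2)).mkQ
        (X (varA i₀) * X (varB j₀) - X (varC i₀) * X (varD j₀)) := by
  rw [congrCoeff_eq_sum, map_sum, Fintype.sum_eq_single (i₀, j₀), if_pos hij₀]
  rintro ⟨i, j⟩ hij
  split_ifs with h
  · have hi : i ≠ i₀ := fun hi => hij (Prod.ext hi (Fin.ext (by
      have := congrArg Fin.val hi; simp only at h this ⊢; omega)))
    have hAB := X_mul_X_mem_heavierSpan F pos (x := varA i) (y := varB j) (K := k + 1)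
      (by rw [pos_varA_add_pos_varB]; simp only at h; omega) (mt (hA i) hi)
    have hCD := X_mul_X_mem_heavierSpan F pos (x := varC i) (y := varD j) (K := k + 1)
      (by rw [pos_varC_add_pos_varD]; simp only at h; omega) (mt (hC i) hi)
    rw [Submodule.mkQ_apply, Submodule.Quotient.mk_eq_zero]
    exact sub_mem hAB hCD
  · exact map_zero _

theorem exists_leading_pair {k : ℕ} (hkr : k ≤ 2 * r + 1) (hks : k ≤ 2 * s + 1)
    (hkrs : k ≤ r + s) :
    ∃ x y : BMVars r s, Sum.isLeft x ∧ ¬ Sum.isLeft y ∧ pos x = k + 1 ∧ pos y = k + 1 ∧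
      (X x * X y : MvPolynomial (BMVars r s) F) ∈
        (Ideal.span {congrCoeff F r s k}).restrictScalars F ⊔
          heavierSpan F posWeight 2 (2 * (k + 1) ^ 2) := by
  set H := heavierSpan F (posWeight (r := r) (s := s)) 2 (2 * (k + 1) ^ 2)
  set g := congrCoeff F r s k
  have hg : g ∈ (Ideal.span {g}).restrictScalars F := Ideal.subset_span rfl
  rcases Nat.even_or_odd k with ⟨q, hq⟩ | ⟨q, hq⟩
  · -- the lightest product is `C_q D_q`
    let i₀ : Fin (r + 1) := ⟨q, by omega⟩
    let j₀ : Fin (s + 1) := ⟨q, by omega⟩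
    refine ⟨varC i₀, varD j₀, rfl, Bool.false_ne_true, by simp [i₀]; omega,
      by simp [j₀]; omega, ?_⟩
    have hAB := X_mul_X_mem_heavierSpan F pos (x := (varA i₀ : BMVars r s)) (y := varB j₀)
      (K := k + 1) (by rw [pos_varA_add_pos_varB]; simp [i₀, j₀]; omega)
      (by simp [i₀]; split_ifs <;> omega)
    have hsum := mkQ_congrCoeff (F := F) (k := k) i₀ j₀ (by simp [i₀, j₀]; omega)
      (fun i hi => by simp at hi; split_ifs at hi <;> omega)
      (fun i hi => Fin.ext (by simp [i₀] at hi ⊢; omega))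
    rw [map_sub, show H.mkQ _ = 0 from (Submodule.Quotient.mk_eq_zero H).mpr hAB, zero_sub,
      ← map_neg] at hsum
    exact Submodule.mem_sup.mpr ⟨-g, neg_mem hg, _, (Submodule.Quotient.eq H).mp hsum, by ring⟩
  · -- the lightest product is `A_i₀ B_(k - i₀)`
    obtain ⟨i₀, hi₀, hi₀k, hj₀s⟩ : ∃ i₀ : Fin (r + 1), pos (varA i₀ : BMVars r s) = k + 1 ∧
        (i₀ : ℕ) ≤ k ∧ k - i₀ ≤ s := by
      by_cases hrs : r ≤ s
      · exact ⟨⟨q, by omega⟩, by simp [hrs]; omega, by simp; omega, by simp; omega⟩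
      · exact ⟨⟨q + 1, by omega⟩, by simp [hrs]; omega, by simp; omega, by simp; omega⟩
    let j₀ : Fin (s + 1) := ⟨k - i₀, by omega⟩
    refine ⟨varA i₀, varB j₀, rfl, Bool.false_ne_true, hi₀, ?_, ?_⟩
    · simp only [pos_varA, pos_varB, j₀] at hi₀ ⊢
      split_ifs at * <;> omega
    have hCD := X_mul_X_mem_heavierSpan F pos (x := (varC i₀ : BMVars r s)) (y := varD j₀)
      (K := k + 1) (by rw [pos_varC_add_pos_varD]; simp [j₀]; omega) (by simp; omega)
    have hsum := mkQ_congrCoeff (F := F) (k := k) i₀ j₀ (by simp [j₀]; omega)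
      (fun i hi => Fin.ext (by simp at hi hi₀; split_ifs at * <;> omega))
      (fun i hi => by simp at hi; omega)
    rw [map_sub, show H.mkQ _ = 0 from (Submodule.Quotient.mk_eq_zero H).mpr hCD, sub_zero]
      at hsum
    exact Submodule.mem_sup.mpr
      ⟨g, hg, _, neg_mem ((Submodule.Quotient.eq H).mp hsum), by ring⟩

theorem ringKrullDim_quotient_add_le {c : ℕ} (hcr : c ≤ 2 * r + 2) (hcs : c ≤ 2 * s + 2)
    (hcrs : c ≤ r + s + 1) (I : Ideal (MvPolynomial (BMVars r s) F))
    (hI : ∀ k < c, congrCoeff F r s k ∈ I) :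
    ringKrullDim (MvPolynomial (BMVars r s) F ⧸ I) + c ≤ (2 * r + 2 * s + 4 : ℕ) := by
  choose u v hu hv hpu hpv hlead using fun k : Fin c =>
    exists_leading_pair (F := F) (r := r) (s := s) (k := k) (by omega) (by omega) (by omega)
  have huv : Function.Injective (Sum.elim u v) := by
    rintro (k | k) (k' | k') h
    · exact congrArg Sum.inl (Fin.ext (by simpa [hpu] using congrArg pos h))
    · exact absurd ((show u k = v k' from h) ▸ hu k) (hv k')
    · exact absurd ((show v k = u k' from h) ▸ hu k') (hv k)
    · exact congrArg Sum.inr (Fin.ext (by simpa [hpv] using congrArg pos h))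
  set L : Fin c → BMVars r s →₀ ℕ := fun k => single (u k) 1 + single (v k) 1
  have hL : ∀ k, monomial (L k) (1 : F) ∈
      I.restrictScalars F ⊔ heavierSpan F posWeight (L k).degree (weight posWeight (L k)) := by
    intro k
    have hdeg : (L k).degree = 2 := by simp [L]
    have hwt : weight posWeight (L k) = 2 * (k + 1) ^ 2 := by
      simp [L, weight_single, posWeight, hpu, hpv]; ring
    rw [hdeg, hwt, show monomial (L k) (1 : F) = X (u k) * X (v k) by simp [L, X, monomial_mul]]
    have hspan : (Ideal.span {congrCoeff F r s k}).restrictScalars F ≤ I.restrictScalars F :=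
      Submodule.restrictScalars_mono F (Ideal.span_le.mpr (Set.singleton_subset_iff.mpr (hI k k.2)))
    exact sup_le_sup_right hspan _ (hlead k)
  have hdim : ringKrullDim (MvPolynomial (BMVars r s) F ⧸ I) ≤ (2 * r + 2 * s + 4 - c : ℕ) := by
    refine ringKrullDim_le_of_forall_not_algebraicIndependent F _ _ fun y =>
      not_algebraicIndependent_of_span_card_le (Ideal.Quotient.mkₐ F I)
        (Ideal.Quotient.mkₐ_surjective F I) (2 ^ c) _ (fun n => ?_) y
    classical
    refine ⟨(finite_standardMonomials L n).toFinset.image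
      fun m => Ideal.Quotient.mk I (monomial m 1), ?_, ?_⟩
    · refine Finset.card_image_le.trans ?_
      rw [← Set.ncard_eq_toFinset_card _ (finite_standardMonomials L n), ← card_eq]
      exact ncard_standardMonomials_le u v huv n
    · intro f hf
      simpa using mk_mem_span_standardMonomials posWeight I L hL hf
  calc ringKrullDim (MvPolynomial (BMVars r s) F ⧸ I) + c
      ≤ ((2 * r + 2 * s + 4 - c : ℕ) : WithBot ℕ∞) + c := by gcongr
    _ = (2 * r + 2 * s + 4 : ℕ) := by rw [← Nat.cast_add, Nat.sub_add_cancel (by omega)]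

end BMVars

theorem stmt18_general (F : Type) [Field F] (r s t : ℕ)
    (ht : t ≤ r + s + 1) :
    ringKrullDim (MvPolynomial (BMVars r s) F ⧸ Ideal.span
        (Set.range fun j : Fin t =>
          Polynomial.coeff
            (genPoly F r s r (fun i => Sum.inl (Sum.inl i)) *
              genPoly F r s s (fun i => Sum.inr (Sum.inl i)) -
             genPoly F r s r (fun i => Sum.inl (Sum.inr i)) *
              genPoly F r s s (fun i => Sum.inr (Sum.inr i))) (j : ℕ)))
      + (min (min (2 * r + 2) (2 * s + 2)) t : ℕ)
      ≤ ((2 * r + 2 * s + 4 : ℕ) : WithBot (WithTop ℕ)) :=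
  BMVars.ringKrullDim_quotient_add_le (by omega) (by omega) (by omega) _ fun k hk =>
    Ideal.subset_span ⟨⟨k, by omega⟩, rfl⟩

/-- Lemma 5.6: inside the affine space of quadruples `(A, C, B, D)` of
polynomials with `deg A, deg C ≤ r` and `deg B, deg D ≤ s` (dimension `2r + 2s + 4`),
the locus `A·B ≡ C·D mod Z^t` has codimension at least `min{2r+2, 2s+2, t}` whenever
`t ≤ r + s + 1`; i.e. the Krull dimension of the coordinate ring of this locus is at most
`2r + 2s + 4 − min{2r+2, 2s+2, t}`. -/
theorem stmt18 (F : Type) [Field F] (r s t : ℕ) (hr : 1 ≤ r) (hs : 1 ≤ s)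
    (ht : t ≤ r + s + 1) :
    ringKrullDim (MvPolynomial (BMVars r s) F ⧸ Ideal.span
        (Set.range fun j : Fin t =>
          Polynomial.coeff
            (genPoly F r s r (fun i => Sum.inl (Sum.inl i)) *
              genPoly F r s s (fun i => Sum.inr (Sum.inl i)) -
             genPoly F r s r (fun i => Sum.inl (Sum.inr i)) *
              genPoly F r s s (fun i => Sum.inr (Sum.inr i))) (j : ℕ)))
      + (min (min (2 * r + 2) (2 * s + 2)) t : ℕ)
      ≤ ((2 * r + 2 * s + 4 : ℕ) : WithBot (WithTop ℕ)) :=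
  stmt18_general F r s t ht
end

section
/- Let O be a complete discrete valuation ring with uniformiser ϖ, and let u ∈ M_n(O) be a matrix such that, setting L = {A ∈ M_n(O) : Au = uA} (the kernel of ad(u) = [u, −] on M_n(O)), there is an ad(u)-stable O-module decomposition M_n(O) = L ⊕ C on which ad(u) restricts to a bijection C → C. Then for every A ∈ M_n(O) there exists k ∈ 1 + ϖ·M_n(O) such that k⁻¹(u − ϖA)k ∈ L. -/
section Stmt19Aux

variable {O : Type} [CommRing O] [IsDomain O] [IsDiscreteValuationRing O]
variable {ϖ : O} {n : ℕ}

/-- `1 + ϖ • B` is a unit in `M_n(O)`. -/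
lemma stmt19_unit (hϖ : Irreducible ϖ) (B : Matrix (Fin n) (Fin n) O) :
    IsUnit (1 + ϖ • B) := by
  rw [Matrix.isUnit_iff_isUnit_det]
  by_contra hd
  have hmem : (1 + ϖ • B).det ∈ IsLocalRing.maximalIdeal O := hd
  set f := Ideal.Quotient.mk (IsLocalRing.maximalIdeal O) with hf
  have hπ : f ϖ = 0 := by
    rw [Ideal.Quotient.eq_zero_iff_mem]
    exact hϖ.not_isUnit
  have hmap : (f.mapMatrix (1 + ϖ • B)) = 1 := by
    ext i j
    simp [Matrix.one_apply, hπ, Matrix.add_apply, Matrix.smul_apply, smul_eq_mul,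
      apply_ite f]
  have h1 : f ((1 + ϖ • B).det) = 1 := by
    rw [RingHom.map_det, hmap, Matrix.det_one]
  have h0 : f ((1 + ϖ • B).det) = 0 := by
    rw [Ideal.Quotient.eq_zero_iff_mem]; exact hmem
  rw [h0] at h1
  exact zero_ne_one h1

omit [IsDiscreteValuationRing O] in
lemma stmt19_cancel (hϖ : Irreducible ϖ) (r : ℕ) {X Y : Matrix (Fin n) (Fin n) O}
    (h : ϖ ^ r • X = ϖ ^ r • Y) : X = Y := by
  have hne : (ϖ ^ r : O) ≠ 0 := pow_ne_zero _ hϖ.ne_zero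
  ext i j
  have := congrFun (congrFun h i) j
  simp only [Matrix.smul_apply, smul_eq_mul] at this
  exact mul_left_cancel₀ hne this

end Stmt19Aux
section Stmt19Solve

variable {O : Type} [CommRing O] [IsDomain O] [IsDiscreteValuationRing O]
variable {ϖ : O} {n : ℕ}
variable {u : Matrix (Fin n) (Fin n) O} {L C : Submodule O (Matrix (Fin n) (Fin n) O)}

omit [IsDomain O] [IsDiscreteValuationRing O] in
lemma stmt19_decomp (hcompl : IsCompl L C) (X : Matrix (Fin n) (Fin n) O) :
    ∃ l ∈ L, ∃ c ∈ C, X = l + c := by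
  have hX : X ∈ L ⊔ C := by rw [hcompl.sup_eq_top]; trivial
  obtain ⟨l, hl, c, hc, h⟩ := Submodule.mem_sup.mp hX
  exact ⟨l, hl, c, hc, h.symm⟩

omit [IsDomain O] [IsDiscreteValuationRing O] in
lemma stmt19_zero (hcompl : IsCompl L C) {X : Matrix (Fin n) (Fin n) O}
    (h1 : X ∈ L) (h2 : X ∈ C) : X = 0 := by
  have : X ∈ L ⊓ C := ⟨h1, h2⟩
  rw [hcompl.inf_eq_bot] at this
  simpa using this

/-- if `X ∈ C` and `[u,X]` is divisible by `ϖ`, then `X = ϖ • Z` with `Z ∈ C`. -/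
lemma stmt19_div_step (hL : ∀ X, X ∈ L ↔ u * X = X * u) (hcompl : IsCompl L C)
    (hstab : ∀ X ∈ C, u * X - X * u ∈ C)
    (hsurj : ∀ Y ∈ C, ∃ X ∈ C, u * X - X * u = Y)
    (hϖ : Irreducible ϖ)
    {X Y : Matrix (Fin n) (Fin n) O} (hX : X ∈ C) (hY : u * X - X * u = ϖ • Y) :
    ∃ Z ∈ C, X = ϖ • Z := by
  obtain ⟨Yl, hYl, Yc, hYc, hYd⟩ := stmt19_decomp hcompl Y
  have hcC : u * X - X * u ∈ C := hstab X hX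
  have hϖYl : ϖ • Yl = 0 := by
    refine stmt19_zero hcompl (L.smul_mem ϖ hYl) ?_
    have : ϖ • Yl = (u * X - X * u) - ϖ • Yc := by
      rw [hY, hYd, smul_add]; abel
    rw [this]
    exact C.sub_mem hcC (C.smul_mem ϖ hYc)
  have hc : u * X - X * u = ϖ • Yc := by
    rw [hY, hYd, smul_add, hϖYl, zero_add]
  obtain ⟨Z, hZ, hZc⟩ := hsurj Yc hYc
  refine ⟨Z, hZ, ?_⟩
  have hdiff : X - ϖ • Z ∈ L := by
    rw [hL]
    have : u * (X - ϖ • Z) - (X - ϖ • Z) * u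
        = (u * X - X * u) - ϖ • (u * Z - Z * u) := by
      simp only [mul_sub, sub_mul, Matrix.mul_smul, Matrix.smul_mul, smul_sub]
      abel
    have h0 : u * (X - ϖ • Z) - (X - ϖ • Z) * u = 0 := by
      rw [this, hZc, hc, sub_self]
    linear_combination (norm := noncomm_ring) h0
  have : X - ϖ • Z = 0 :=
    stmt19_zero hcompl hdiff (C.sub_mem hX (C.smul_mem ϖ hZ))
  linear_combination (norm := abel) this

/-- if `X ∈ C` and `[u, X] = ϖ^r • E` then `X = ϖ^r • W` with `W ∈ C`. -/
lemma stmt19_divC (hL : ∀ X, X ∈ L ↔ u * X = X * u) (hcompl : IsCompl L C)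
    (hstab : ∀ X ∈ C, u * X - X * u ∈ C)
    (hsurj : ∀ Y ∈ C, ∃ X ∈ C, u * X - X * u = Y)
    (hϖ : Irreducible ϖ) :
    ∀ (r : ℕ) (X : Matrix (Fin n) (Fin n) O), X ∈ C →
      ∀ E, u * X - X * u = ϖ ^ r • E → ∃ W ∈ C, X = ϖ ^ r • W := by
  intro r
  induction r with
  | zero => intro X hX E _; exact ⟨X, hX, by simp⟩
  | succ r ih =>
    intro X hX E hE
    have h1 : u * X - X * u = ϖ • (ϖ ^ r • E) := by
      rw [hE, smul_smul, pow_succ, mul_comm]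
    obtain ⟨Z, hZ, hXZ⟩ := stmt19_div_step hL hcompl hstab hsurj hϖ hX h1
    have h2 : ϖ • (u * Z - Z * u) = ϖ • (ϖ ^ r • E) := by
      rw [← h1, hXZ]
      simp only [Matrix.mul_smul, Matrix.smul_mul, smul_sub]
    have h3 : u * Z - Z * u = ϖ ^ r • E := by
      have := stmt19_cancel hϖ 1 (X := u * Z - Z * u) (Y := ϖ ^ r • E) (by simpa [pow_one] using h2)
      exact this
    obtain ⟨W, hW, hZW⟩ := ih Z hZ E h3
    refine ⟨W, hW, ?_⟩
    rw [hXZ, hZW, smul_smul, pow_succ, mul_comm]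

/-- solving `[u,X] = c` for `c ∈ C` divisible by `ϖ^r`, with `X ∈ C` divisible by `ϖ^r`. -/
lemma stmt19_solve (hL : ∀ X, X ∈ L ↔ u * X = X * u) (hcompl : IsCompl L C)
    (hstab : ∀ X ∈ C, u * X - X * u ∈ C)
    (hsurj : ∀ Y ∈ C, ∃ X ∈ C, u * X - X * u = Y)
    (hϖ : Irreducible ϖ) (r : ℕ) {c : Matrix (Fin n) (Fin n) O} (hc : c ∈ C)
    (E : Matrix (Fin n) (Fin n) O) (hE : c = ϖ ^ r • E) :
    ∃ X ∈ C, ∃ W, X = ϖ ^ r • W ∧ u * X - X * u = c := by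
  obtain ⟨X, hX, hXc⟩ := hsurj c hc
  obtain ⟨W, _, hXW⟩ := stmt19_divC hL hcompl hstab hsurj hϖ r X hX E (by rw [hXc, hE])
  exact ⟨X, hX, W, hXW, hXc⟩

end Stmt19Solve
section Stmt19Main

variable {O : Type} [CommRing O] [IsDomain O] [IsDiscreteValuationRing O]
variable {ϖ : O} {n : ℕ}
variable {u A : Matrix (Fin n) (Fin n) O} {L C : Submodule O (Matrix (Fin n) (Fin n) O)}

/-- invariant carried through the iteration: `(u - ϖA)(1+ϖB) = (1+ϖB)v`,
`v = ℓ + c` with `ℓ ∈ L`, `c ∈ C`, `c` divisible by `ϖ^(r+1)`, and `v ≡ u mod ϖ`. -/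
def stmt19Cond (u A : Matrix (Fin n) (Fin n) O)
    (L C : Submodule O (Matrix (Fin n) (Fin n) O)) (ϖ : O) (r : ℕ)
    (B v ℓ c : Matrix (Fin n) (Fin n) O) : Prop :=
  (u - ϖ • A) * (1 + ϖ • B) = (1 + ϖ • B) * v ∧
  ℓ ∈ L ∧ c ∈ C ∧ v = ℓ + c ∧ (∃ E, c = ϖ ^ (r + 1) • E) ∧ (∃ D, v = u + ϖ • D)

omit [IsDomain O] [IsDiscreteValuationRing O] in
lemma stmt19_base (hL : ∀ X, X ∈ L ↔ u * X = X * u) (hcompl : IsCompl L C) :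
    ∃ v ℓ c, stmt19Cond u A L C ϖ 0 (0 : Matrix (Fin n) (Fin n) O) v ℓ c := by
  obtain ⟨Al, hAl, Ac, hAc, hA⟩ := stmt19_decomp hcompl A
  refine ⟨u - ϖ • A, u - ϖ • Al, ϖ • (-Ac), ?_, ?_, ?_, ?_, ⟨-Ac, by rw [pow_one]⟩,
    ⟨-A, by module⟩⟩
  · simp
  · exact L.sub_mem ((hL u).mpr rfl) (L.smul_mem ϖ hAl)
  · exact C.smul_mem ϖ (C.neg_mem hAc)
  · rw [hA]; module

lemma stmt19_step (hL : ∀ X, X ∈ L ↔ u * X = X * u) (hcompl : IsCompl L C)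
    (hstab : ∀ X ∈ C, u * X - X * u ∈ C)
    (hsurj : ∀ Y ∈ C, ∃ X ∈ C, u * X - X * u = Y)
    (hϖ : Irreducible ϖ) (r : ℕ) {B v ℓ c : Matrix (Fin n) (Fin n) O}
    (h : stmt19Cond u A L C ϖ r B v ℓ c) :
    ∃ B' v' ℓ' c' G, stmt19Cond u A L C ϖ (r + 1) B' v' ℓ' c' ∧ B' = B + ϖ ^ r • G := by
  obtain ⟨h1, hℓ, hc, hd, ⟨E, hE⟩, ⟨D, hD⟩⟩ := h
  obtain ⟨X, hXC, W, hXW, hXc⟩ :=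
    stmt19_solve hL hcompl hstab hsurj hϖ (r + 1) (C.neg_mem hc) (-E) (by rw [hE]; module)
  -- `1 + X` is a unit
  have hXu : IsUnit (1 + X) := by
    have hX1 : 1 + X = 1 + ϖ • (ϖ ^ r • W) := by rw [hXW]; module
    rw [hX1]; exact stmt19_unit hϖ _
  obtain ⟨x, hx⟩ := hXu
  set B' : Matrix (Fin n) (Fin n) O := B + ϖ ^ r • ((1 + ϖ • B) * W) with hB'
  set v' : Matrix (Fin n) (Fin n) O := (↑x⁻¹ : Matrix (Fin n) (Fin n) O) * v * (↑x : Matrix (Fin n) (Fin n) O) with hv'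
  have hxinv_left : (↑x⁻¹ : Matrix (Fin n) (Fin n) O) * (1 + X) = 1 := by
    rw [← hx]; exact x.inv_mul
  -- the new k
  have hk' : (1 + ϖ • B) * (1 + X) = 1 + ϖ • B' := by
    rw [hXW, hB']
    simp only [mul_add, add_mul, mul_one, one_mul, smul_add, mul_smul_comm, smul_mul_assoc,
      smul_smul]
    module
  -- conjugation identity
  have h1' : (u - ϖ • A) * (1 + ϖ • B') = (1 + ϖ • B') * v' := by
    have h2 : (1 + X) * v' = v * (1 + X) := by
      rw [hv', ← hx, ← mul_assoc, Units.mul_inv_cancel_left]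
    calc (u - ϖ • A) * (1 + ϖ • B') = ((u - ϖ • A) * (1 + ϖ • B)) * (1 + X) := by
          rw [← hk', mul_assoc]
      _ = (1 + ϖ • B) * (v * (1 + X)) := by rw [h1, mul_assoc]
      _ = (1 + ϖ • B) * ((1 + X) * v') := by rw [h2]
      _ = (1 + ϖ • B') * v' := by rw [← mul_assoc, hk']
  -- v' = v + x⁻¹ [v, X]
  have hvv : v' = v + (↑x⁻¹ : Matrix (Fin n) (Fin n) O) * (v * X - X * v) := by
    have e1 : v' = (↑x⁻¹ : Matrix (Fin n) (Fin n) O) * (v * (1 + X)) := by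
      rw [hv', hx, mul_assoc]
    have e2 : v * (1 + X) = (1 + X) * v + (v * X - X * v) := by noncomm_ring
    rw [e1, e2, mul_add, ← mul_assoc, hxinv_left, one_mul]
  have hxinv_eq : (↑x⁻¹ : Matrix (Fin n) (Fin n) O)
      = 1 - (↑x⁻¹ : Matrix (Fin n) (Fin n) O) * X := by
    have h3 := hxinv_left
    linear_combination (norm := noncomm_ring) h3
  set T : Matrix (Fin n) (Fin n) O := -E + ϖ • (D * W - W * D) with hT
  have hcomm : v * X - X * v = ϖ ^ (r + 1) • T := by
    have h5 : v * X - X * v = (u * X - X * u) + ϖ • (D * X - X * D) := by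
      rw [hD]
      simp only [add_mul, mul_add, smul_mul_assoc, mul_smul_comm, smul_sub]
      abel
    rw [h5, hXc, hE, hXW, hT]
    simp only [mul_smul_comm, smul_mul_assoc, smul_sub, smul_add, smul_smul, smul_neg]
    module
  set F : Matrix (Fin n) (Fin n) O :=
    (D * W - W * D) - ϖ ^ r • ((↑x⁻¹ : Matrix (Fin n) (Fin n) O) * (W * T)) with hF
  have hv'2 : v' = ℓ + ϖ ^ (r + 2) • F := by
    have e3 : v' = v + ϖ ^ (r + 1) • T
        - ϖ ^ (r + 1) • (ϖ ^ (r + 1) • ((↑x⁻¹ : Matrix (Fin n) (Fin n) O) * (W * T))) := by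
      rw [hvv, hcomm]
      nth_rewrite 1 [hxinv_eq]
      rw [hXW]
      simp only [sub_mul, one_mul, mul_smul_comm, smul_mul_assoc, mul_assoc]
      module
    have e4 : v = ℓ + c := hd
    rw [e3, e4, hE, hF, hT]
    simp only [smul_sub, smul_add, smul_smul, smul_neg]
    module
  obtain ⟨Fl, hFl, Fc, hFc, hFd⟩ := stmt19_decomp hcompl F
  refine ⟨B', v', ℓ + ϖ ^ (r + 2) • Fl, ϖ ^ (r + 2) • Fc, (1 + ϖ • B) * W,
    ⟨h1', L.add_mem hℓ (L.smul_mem _ hFl), C.smul_mem _ hFc, ?_, ⟨Fc, rfl⟩, ?_⟩, hB'⟩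
  · rw [hv'2, hFd]; module
  · -- v' = u + ϖ • D'
    refine ⟨D + ϖ ^ r • ((↑x⁻¹ : Matrix (Fin n) (Fin n) O) * T), ?_⟩
    rw [hvv, hcomm, hD, mul_smul_comm]
    module

end Stmt19Main
section Stmt19Seq

variable {O : Type} [CommRing O] [IsDomain O] [IsDiscreteValuationRing O]
variable {ϖ : O} {n : ℕ}
variable {u A : Matrix (Fin n) (Fin n) O} {L C : Submodule O (Matrix (Fin n) (Fin n) O)}

lemma stmt19_seq (hL : ∀ X, X ∈ L ↔ u * X = X * u) (hcompl : IsCompl L C)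
    (hstab : ∀ X ∈ C, u * X - X * u ∈ C)
    (hsurj : ∀ Y ∈ C, ∃ X ∈ C, u * X - X * u = Y)
    (hϖ : Irreducible ϖ) :
    ∃ f : ℕ → (Matrix (Fin n) (Fin n) O × Matrix (Fin n) (Fin n) O ×
        Matrix (Fin n) (Fin n) O × Matrix (Fin n) (Fin n) O),
      (∀ r, stmt19Cond u A L C ϖ r (f r).1 (f r).2.1 (f r).2.2.1 (f r).2.2.2) ∧
      (∀ r, ∃ G, (f (r + 1)).1 = (f r).1 + ϖ ^ r • G) := by
  classical
  obtain ⟨v0, l0, c0, h0⟩ := stmt19_base (A := A) (ϖ := ϖ) hL hcompl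
  have hstep : ∀ (r : ℕ) (q : Matrix (Fin n) (Fin n) O × Matrix (Fin n) (Fin n) O ×
      Matrix (Fin n) (Fin n) O × Matrix (Fin n) (Fin n) O),
      stmt19Cond u A L C ϖ r q.1 q.2.1 q.2.2.1 q.2.2.2 →
      ∃ q' : Matrix (Fin n) (Fin n) O × Matrix (Fin n) (Fin n) O ×
        Matrix (Fin n) (Fin n) O × Matrix (Fin n) (Fin n) O,
        stmt19Cond u A L C ϖ (r + 1) q'.1 q'.2.1 q'.2.2.1 q'.2.2.2 ∧
        ∃ G, q'.1 = q.1 + ϖ ^ r • G := by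
    intro r q hq
    obtain ⟨B', v', l', c', G, h1, h2⟩ := stmt19_step hL hcompl hstab hsurj hϖ r hq
    exact ⟨(B', v', l', c'), h1, G, h2⟩
  choose next hnext hcomp using hstep
  let g : (r : ℕ) → {q : Matrix (Fin n) (Fin n) O × Matrix (Fin n) (Fin n) O ×
      Matrix (Fin n) (Fin n) O × Matrix (Fin n) (Fin n) O //
      stmt19Cond u A L C ϖ r q.1 q.2.1 q.2.2.1 q.2.2.2} :=
    fun r => Nat.rec ⟨(0, v0, l0, c0), h0⟩ (fun r p => ⟨next r p.1 p.2, hnext r p.1 p.2⟩) r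
  exact ⟨fun r => (g r).1, fun r => (g r).2, fun r => hcomp r (g r).1 (g r).2⟩

end Stmt19Seq
section Stmt19Ideal

variable {O : Type} [CommRing O]

lemma stmt19_Im (ϖ : O) (m : ℕ) :
    ((Ideal.span {ϖ}) ^ m • ⊤ : Submodule O O) = Ideal.span {ϖ ^ m} := by
  rw [Ideal.smul_eq_mul, Ideal.mul_top, Ideal.span_singleton_pow]

end Stmt19Ideal

/-- Lemma A.7: let `O` be a complete DVR with uniformiser `ϖ`, `u` a matrix
over `O`, `L` its centralizer in `M_n(O)` and `C` an `ad(u)`-stable complement on which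
`ad(u)` is bijective. Then for every `A` there exists `k ∈ 1 + ϖ·M_n(O)` (a unit) with
`k⁻¹ (u − ϖA) k ∈ L`. -/
theorem stmt19 (O : Type) [CommRing O] [IsDomain O] [IsDiscreteValuationRing O]
    (ϖ : O) (hϖ : Irreducible ϖ) [IsAdicComplete (Ideal.span {ϖ}) O]
    (n : ℕ) (u : Matrix (Fin n) (Fin n) O)
    (L C : Submodule O (Matrix (Fin n) (Fin n) O))
    (hL : ∀ X, X ∈ L ↔ u * X = X * u)
    (hcompl : IsCompl L C)
    (hstab : ∀ X ∈ C, u * X - X * u ∈ C)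
    (hsurj : ∀ Y ∈ C, ∃ X ∈ C, u * X - X * u = Y)
    (A : Matrix (Fin n) (Fin n) O) :
    ∃ k : (Matrix (Fin n) (Fin n) O)ˣ,
      (∃ B : Matrix (Fin n) (Fin n) O, (k : Matrix (Fin n) (Fin n) O) = 1 + ϖ • B) ∧
      ((k⁻¹ : (Matrix (Fin n) (Fin n) O)ˣ) : Matrix (Fin n) (Fin n) O) * (u - ϖ • A) * k ∈ L := by
  classical
  obtain ⟨f, hcond, hcomp⟩ := stmt19_seq (u := u) (A := A) (ϖ := ϖ) hL hcompl hstab hsurj hϖ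
  -- the sequence of `B`s is Cauchy
  have hcau : ∀ m N, m ≤ N → ∃ G, (f N).1 = (f m).1 + ϖ ^ m • G := by
    intro m N hmN
    induction N, hmN using Nat.le_induction with
    | base => exact ⟨0, by simp⟩
    | succ N hN ih =>
      obtain ⟨G, hG⟩ := ih
      obtain ⟨G', hG'⟩ := hcomp N
      refine ⟨G + ϖ ^ (N - m) • G', ?_⟩
      have hNm : m + (N - m) = N := Nat.add_sub_cancel' hN
      rw [hG', hG, smul_add, smul_smul, ← pow_add, hNm]
      abel
  -- entrywise limit
  have hpre : IsPrecomplete (Ideal.span {ϖ}) O := inferInstance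
  have hlim : ∀ i j, ∃ b : O, ∀ r,
      (f r).1 i j ≡ b [SMOD ((Ideal.span {ϖ}) ^ r • ⊤ : Submodule O O)] := by
    intro i j
    refine hpre.prec (f := fun r => (f r).1 i j) ?_
    intro m N hmN
    rw [SModEq.sub_mem, stmt19_Im, Ideal.mem_span_singleton]
    obtain ⟨G, hG⟩ := hcau m N hmN
    refine ⟨-G i j, ?_⟩
    show (f m).1 i j - (f N).1 i j = _
    rw [hG]
    simp only [Matrix.add_apply, Matrix.smul_apply, smul_eq_mul]
    ring
  choose Bent hBent using hlim
  set B : Matrix (Fin n) (Fin n) O := Matrix.of Bent with hBdef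
  have hBdiff : ∀ r, ∃ Δ, B = (f r).1 + ϖ ^ r • Δ := by
    intro r
    have h6 : ∀ i j, ∃ t, B i j - (f r).1 i j = ϖ ^ r * t := by
      intro i j
      have h7 := hBent i j r
      rw [SModEq.sub_mem, stmt19_Im, Ideal.mem_span_singleton] at h7
      obtain ⟨t, ht⟩ := h7
      refine ⟨-t, ?_⟩
      simp only [hBdef, Matrix.of_apply]
      linear_combination -ht
    choose Δ hΔ using h6
    refine ⟨Matrix.of Δ, ?_⟩
    ext i j
    have h8 := hΔ i j
    simp only [Matrix.add_apply, Matrix.smul_apply, smul_eq_mul, Matrix.of_apply]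
    linear_combination h8
  have hk : IsUnit (1 + ϖ • B) := stmt19_unit hϖ B
  refine ⟨hk.unit, ⟨B, hk.unit_spec⟩, ?_⟩
  set v : Matrix (Fin n) (Fin n) O :=
    (↑hk.unit⁻¹ : Matrix (Fin n) (Fin n) O) * (u - ϖ • A) * (↑hk.unit : Matrix (Fin n) (Fin n) O)
    with hv
  show v ∈ L
  obtain ⟨li, hli, ci, hci, hvd⟩ := stmt19_decomp hcompl v
  have hdiv : ∀ r : ℕ, ∃ S, ci = ϖ ^ (r + 1) • S := by
    intro r
    obtain ⟨h1, hl_r, hc_r, hd_r, ⟨E, hE⟩, -⟩ := hcond r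
    obtain ⟨Δ, hΔ⟩ := hBdiff r
    have hkx : (↑hk.unit : Matrix (Fin n) (Fin n) O)
        = (1 + ϖ • (f r).1) + ϖ ^ (r + 1) • Δ := by
      rw [hk.unit_spec, hΔ]
      module
    have e : (1 + ϖ • (f r).1 : Matrix (Fin n) (Fin n) O)
        = ↑hk.unit - ϖ ^ (r + 1) • Δ := by rw [hkx]; abel
    have hH0 : (u - ϖ • A) * (↑hk.unit : Matrix (Fin n) (Fin n) O)
        = (↑hk.unit : Matrix (Fin n) (Fin n) O) * (f r).2.1
          + ϖ ^ (r + 1) • ((u - ϖ • A) * Δ - Δ * (f r).2.1) := by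
      calc (u - ϖ • A) * (↑hk.unit : Matrix (Fin n) (Fin n) O)
          = (u - ϖ • A) * (1 + ϖ • (f r).1) + ϖ ^ (r + 1) • ((u - ϖ • A) * Δ) := by
            rw [hkx, mul_add, mul_smul_comm]
        _ = ((↑hk.unit : Matrix (Fin n) (Fin n) O) - ϖ ^ (r + 1) • Δ) * (f r).2.1
              + ϖ ^ (r + 1) • ((u - ϖ • A) * Δ) := by rw [h1, e]
        _ = (↑hk.unit : Matrix (Fin n) (Fin n) O) * (f r).2.1
              + ϖ ^ (r + 1) • ((u - ϖ • A) * Δ - Δ * (f r).2.1) := by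
            simp only [sub_mul, smul_mul_assoc, smul_sub]
            abel
    set H : Matrix (Fin n) (Fin n) O :=
      (↑hk.unit⁻¹ : Matrix (Fin n) (Fin n) O) * ((u - ϖ • A) * Δ - Δ * (f r).2.1) with hH
    have hveq : v = (f r).2.1 + ϖ ^ (r + 1) • H := by
      rw [hv]
      calc (↑hk.unit⁻¹ : Matrix (Fin n) (Fin n) O) * (u - ϖ • A)
            * (↑hk.unit : Matrix (Fin n) (Fin n) O)
          = (↑hk.unit⁻¹ : Matrix (Fin n) (Fin n) O)
              * ((u - ϖ • A) * (↑hk.unit : Matrix (Fin n) (Fin n) O)) := by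
            rw [mul_assoc]
        _ = (↑hk.unit⁻¹ : Matrix (Fin n) (Fin n) O)
              * ((↑hk.unit : Matrix (Fin n) (Fin n) O) * (f r).2.1)
              + ϖ ^ (r + 1) • H := by rw [hH0, mul_add, mul_smul_comm, hH]
        _ = (f r).2.1 + ϖ ^ (r + 1) • H := by rw [Units.inv_mul_cancel_left]
    obtain ⟨Sl, hSl, Sc, hSc, hSd⟩ := stmt19_decomp hcompl (E + H)
    have hv2 : v = (f r).2.2.1 + ϖ ^ (r + 1) • (E + H) := by
      rw [hveq, hd_r, hE, smul_add]
      abel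
    have hmemL : ci - ϖ ^ (r + 1) • Sc ∈ L := by
      have h9 : ci - ϖ ^ (r + 1) • Sc = ((f r).2.2.1 + ϖ ^ (r + 1) • Sl) - li := by
        have h10 := hvd
        rw [hv2, hSd, smul_add] at h10
        linear_combination (norm := abel) -h10
      rw [h9]
      exact L.sub_mem (L.add_mem hl_r (L.smul_mem _ hSl)) hli
    have hmemC : ci - ϖ ^ (r + 1) • Sc ∈ C := C.sub_mem hci (C.smul_mem _ hSc)
    have h0 : ci - ϖ ^ (r + 1) • Sc = 0 := stmt19_zero hcompl hmemL hmemC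
    exact ⟨Sc, sub_eq_zero.mp h0⟩
  have hHaus : IsHausdorff (Ideal.span {ϖ}) O := inferInstance
  have hci0 : ci = 0 := by
    ext i j
    refine hHaus.haus (ci i j) ?_
    intro N
    rw [SModEq.zero, stmt19_Im, Ideal.mem_span_singleton]
    obtain ⟨S, hS⟩ := hdiv N
    refine dvd_trans (pow_dvd_pow ϖ (Nat.le_succ N)) ⟨S i j, ?_⟩
    rw [hS]
    simp [Matrix.smul_apply, smul_eq_mul]
  rw [hvd, hci0, add_zero]
  exact hli
end
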